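/- In any Wardrop equilibrium σ*, the carpool fraction is positive: σ*_pool > 0. Specifically, if σ*_pool = 0 then every agent with γ < τ must play the ordinary lane, which forces β·C_o(σ*_o D) ≤ β·C_h(σ*_toll D) + γ for all such γ and all β ∈ [0, β̄]; this implies agents playing the toll action would strictly prefer the ordinary lane, so σ*_toll = 0, contradicting that the HOT lane carries positive flow in equilibrium. -/

import Mathlib

open MeasureTheory

/-- Lemma 2: in any Wardrop equilibrium (with both lanes carrying positive flow),
the carpool fraction is positive: `σ*_pool > 0`. -/
theorem stmt_3 (Ch Co : ℝ → ℝ) (βbar γbar τ A D : ℝ)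
    (hCh : StrictMono Ch) (hCo : StrictMono Co) (hfree : Ch 0 = Co 0)
    (hβ : 0 < βbar) (hγ : 0 < γbar) (hτ : 0 < τ) (hA : 2 ≤ A) (hD : 0 < D)
    (s : ℝ × ℝ → Fin 3) (σ : Fin 3 → ℝ)
    -- equilibrium condition (1): the mass playing each action matches σ
    (hσ : ∀ i, D * σ i =
      (volume {p : ℝ × ℝ | p ∈ Set.Icc ((0 : ℝ), (0 : ℝ)) (βbar, γbar) ∧ s p = i}).toReal
        / (βbar * γbar))
    (cost : ℝ × ℝ → Fin 3 → ℝ)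
    (hcost : ∀ p : ℝ × ℝ,
      cost p 0 = p.1 * Ch ((σ 0 + σ 1 / A) * D) + τ ∧
      cost p 1 = p.1 * Ch ((σ 0 + σ 1 / A) * D) + p.2 ∧
      cost p 2 = p.1 * Co (σ 2 * D))
    -- Wardrop: every agent's chosen action minimizes their cost
    (heq : ∀ p ∈ Set.Icc ((0 : ℝ), (0 : ℝ)) (βbar, γbar), ∀ j : Fin 3,
      cost p (s p) ≤ cost p j)
    -- both lanes carry positive flow in equilibrium
    (ho : 0 < σ 2) (hh : 0 < σ 0 + σ 1) :
    0 < σ 1 := by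
  set K := Ch ((σ 0 + σ 1 / A) * D) with hK
  set L := Co (σ 2 * D) with hL
  -- nonnegativity of each σ i
  have hσnn : ∀ i, 0 ≤ σ i := by
    intro i
    have h := hσ i
    have : 0 ≤ D * σ i := by
      rw [h]; positivity
    nlinarith
  -- Step 1: show L - K > 0, using either σ 0 = 0 case (trivial) or a toll agent.
  by_cases h0 : σ 0 ≤ 0
  · -- then σ 1 > 0 directly
    linarith [hσnn 0]
  push_neg at h0
  -- the set of toll players is nonempty
  have htoll : {p : ℝ × ℝ | p ∈ Set.Icc ((0 : ℝ), (0 : ℝ)) (βbar, γbar) ∧ s p = 0}.Nonempty := by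
    apply MeasureTheory.nonempty_of_measure_ne_zero (μ := volume)
    intro hzero
    have h := hσ 0
    rw [hzero] at h
    simp at h
    rcases h with h | h <;> linarith
  obtain ⟨p0, hp0box, hp0s⟩ := htoll
  have hp0le : cost p0 0 ≤ cost p0 2 := hp0s ▸ heq p0 hp0box 2
  have hc0 := hcost p0
  have hp0nn : 0 ≤ p0.1 := hp0box.1.1
  have hΔ : 0 < L - K := by
    rw [hc0.1, hc0.2.2] at hp0le
    nlinarith
  set Δ := L - K with hΔdef
  -- Step 2: build a rectangle of agents for whom pooling is strictly best
  set ε : ℝ := min τ (min γbar (βbar / 2 * Δ)) with hε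
  have hεpos : 0 < ε := by
    apply lt_min hτ
    apply lt_min hγ
    positivity
  set R : Set (ℝ × ℝ) := Set.Ioo (βbar / 2) βbar ×ˢ Set.Ioo 0 ε with hR
  have hRsub : R ⊆ {p : ℝ × ℝ | p ∈ Set.Icc ((0 : ℝ), (0 : ℝ)) (βbar, γbar) ∧ s p = 1} := by
    rintro ⟨b, g⟩ ⟨⟨hb1, hb2⟩, hg1, hg2⟩
    have hgτ : g < τ := lt_of_lt_of_le hg2 (min_le_left _ _)
    have hgγ : g ≤ γbar := le_of_lt (lt_of_lt_of_le hg2 (le_trans (min_le_right _ _) (min_le_left _ _)))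
    have hgΔ : g < βbar / 2 * Δ := lt_of_lt_of_le hg2 (le_trans (min_le_right _ _) (min_le_right _ _))
    have hbox : (b, g) ∈ Set.Icc ((0 : ℝ), (0 : ℝ)) (βbar, γbar) :=
      ⟨Prod.mk_le_mk.mpr ⟨by linarith, le_of_lt hg1⟩,
       Prod.mk_le_mk.mpr ⟨le_of_lt hb2, hgγ⟩⟩
    refine ⟨hbox, ?_⟩
    have hc := hcost (b, g)
    have h1lt0 : cost (b, g) 1 < cost (b, g) 0 := by
      rw [hc.2.1, hc.1]; simp only
      linarith
    have h1lt2 : cost (b, g) 1 < cost (b, g) 2 := by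
      rw [hc.2.1, hc.2.2]; simp only
      have : b * L = b * K + b * Δ := by rw [hΔdef]; ring
      rw [this]
      have : βbar / 2 * Δ ≤ b * Δ := by
        apply mul_le_mul_of_nonneg_right (le_of_lt hb1) (le_of_lt hΔ)
      linarith
    have hmin := heq (b, g) hbox
    -- s (b,g) cannot be 0 or 2
    have h3 : ∀ i : Fin 3, i = 0 ∨ i = 1 ∨ i = 2 := by decide
    rcases h3 (s (b, g)) with h | h | h
    · exact absurd (h ▸ hmin 1) (not_le.mpr h1lt0)
    · exact h
    · exact absurd (h ▸ hmin 1) (not_le.mpr h1lt2)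
  -- R is open and nonempty, hence has positive volume
  have hRopen : IsOpen R := (isOpen_Ioo).prod isOpen_Ioo
  have hRne : R.Nonempty := by
    refine ⟨(βbar * 3 / 4, ε / 2), ⟨⟨by linarith, by linarith⟩, ⟨by linarith, by linarith⟩⟩⟩
  have hRpos : 0 < volume R := hRopen.measure_pos volume hRne
  -- conclude
  have hmono : volume R ≤ volume {p : ℝ × ℝ | p ∈ Set.Icc ((0 : ℝ), (0 : ℝ)) (βbar, γbar) ∧ s p = 1} :=
    measure_mono hRsub
  have hfin : volume {p : ℝ × ℝ | p ∈ Set.Icc ((0 : ℝ), (0 : ℝ)) (βbar, γbar) ∧ s p = 1} < ⊤ := by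
    apply lt_of_le_of_lt (measure_mono (fun p hp => hp.1))
    exact (isCompact_Icc).measure_lt_top
  have hpos : 0 < (volume {p : ℝ × ℝ | p ∈ Set.Icc ((0 : ℝ), (0 : ℝ)) (βbar, γbar) ∧ s p = 1}).toReal := by
    apply ENNReal.toReal_pos
    · exact fun h => absurd (le_antisymm (h ▸ hmono) zero_le) (ne_of_gt hRpos)
    · exact ne_of_lt hfin
  have hfinal := hσ 1
  have : 0 < D * σ 1 := by
    rw [hfinal]; positivity
  nlinarith
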